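/- Let p ∈ (0,1) and let (μ_i)_{i≥1} be a sequence of positive reals with μ_i = i^{-1/p}. Then for every λ ∈ (0,1], the series ∑_{i=1}^∞ μ_i/(μ_i + λ) converges and there is a constant C (depending only on p) such that ∑_{i=1}^∞ μ_i/(μ_i + λ) ≤ C λ^{-p}. -/

import Mathlib

/-!
Each term satisfies `μᵢ / (μᵢ + λ) ≤ min 1 (μᵢ / λ)`. Split the series at `N = ⌈λ^{-p}⌉`: the first
`N` terms contribute at most `N ≤ 2 λ^{-p}`, and by the integral test the tail is at most
`λ⁻¹ ∫_N^∞ x^{-1/p} dx = λ⁻¹ N^{1-1/p} / (1/p - 1) ≤ λ^{-p} p / (1 - p)`.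
-/

open Real Set MeasureTheory

theorem tsum_rpow_neg_nat_add_le {s : ℝ} (hs : 1 < s) {N : ℕ} (hN : 0 < N) :
    ∑' n : ℕ, ((n + N + 1 : ℕ) : ℝ) ^ (-s) ≤ (N : ℝ) ^ (1 - s) / (s - 1) := by
  have hN' : (0 : ℝ) < N := by exact_mod_cast hN
  have anti : AntitoneOn (fun x : ℝ => x ^ (-s)) (Ici (N : ℝ)) := fun x hx y _ hxy =>
    rpow_le_rpow_of_nonpos (hN'.trans_le hx) hxy (by linarith)
  calc ∑' n : ℕ, ((n + N + 1 : ℕ) : ℝ) ^ (-s)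
      ≤ ∫ x in Ioi (N : ℝ), x ^ (-s) :=
        anti.tsum_comp_add_le_integral N (integrableOn_Ioi_rpow_of_lt (by linarith) hN')
          fun x hx => rpow_nonneg (hN'.trans hx).le _
    _ = (N : ℝ) ^ (1 - s) / (s - 1) := by
        rw [integral_Ioi_rpow_of_lt (by linarith) hN', neg_div, ← div_neg]
        ring_nf

theorem summable_and_tsum_div_add_le {s : ℝ} (hs : 1 < s) {μ : ℕ → ℝ} (hμ0 : ∀ i, 0 ≤ μ i)
    (hμ : ∀ i, μ i ≤ ((i + 1 : ℕ) : ℝ) ^ (-s)) {lam : ℝ} (hlam : 0 < lam) {N : ℕ} (hN : 0 < N) :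
    Summable (fun i => μ i / (μ i + lam)) ∧
      ∑' i, μ i / (μ i + lam) ≤ N + (N : ℝ) ^ (1 - s) / ((s - 1) * lam) := by
  have h_nonneg : ∀ i, 0 ≤ μ i / (μ i + lam) := fun i => by have := hμ0 i; positivity
  have h_le_one : ∀ i, μ i / (μ i + lam) ≤ 1 := fun i =>
    div_le_one_of_le₀ (by linarith [hμ0 i]) (by linarith [hμ0 i])
  have h_le_decay : ∀ i, μ i / (μ i + lam) ≤ ((i + 1 : ℕ) : ℝ) ^ (-s) / lam := fun i =>
    (div_le_div_of_nonneg_left (hμ0 i) hlam (by linarith [hμ0 i])).trans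
      (div_le_div_of_nonneg_right (hμ i) hlam.le)
  have h_decay : Summable (fun i : ℕ => ((i + 1 : ℕ) : ℝ) ^ (-s)) :=
    (summable_nat_add_iff 1).mpr (summable_nat_rpow.mpr (by linarith))
  have hsum : Summable (fun i => μ i / (μ i + lam)) :=
    .of_nonneg_of_le h_nonneg h_le_decay (h_decay.div_const lam)
  refine ⟨hsum, ?_⟩
  have h_head : ∑ i ∈ Finset.range N, μ i / (μ i + lam) ≤ N := by
    simpa using Finset.sum_le_card_nsmul (Finset.range N) _ 1 fun i _ => h_le_one i
  have h_tail : ∑' i, μ (i + N) / (μ (i + N) + lam) ≤ (N : ℝ) ^ (1 - s) / ((s - 1) * lam) :=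
    calc ∑' i, μ (i + N) / (μ (i + N) + lam)
        ≤ ∑' i : ℕ, ((i + N + 1 : ℕ) : ℝ) ^ (-s) / lam :=
          ((summable_nat_add_iff N).mpr hsum).tsum_le_tsum (fun i => h_le_decay (i + N))
            (((summable_nat_add_iff N).mpr h_decay).div_const lam)
      _ = (∑' i : ℕ, ((i + N + 1 : ℕ) : ℝ) ^ (-s)) / lam := tsum_div_const
      _ ≤ (N : ℝ) ^ (1 - s) / (s - 1) / lam := by gcongr; exact tsum_rpow_neg_nat_add_le hs hN
      _ = _ := div_div _ _ _
  rw [← hsum.sum_add_tsum_nat_add N]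
  exact add_le_add h_head h_tail

theorem natCeil_rpow_neg_rpow_le {p lam : ℝ} (hp : 0 < p) (hp1 : p ≤ 1) (hlam : 0 < lam) :
    (⌈lam ^ (-p)⌉₊ : ℝ) ^ (1 - 1 / p) ≤ lam ^ (1 - p) :=
  calc (⌈lam ^ (-p)⌉₊ : ℝ) ^ (1 - 1 / p)
      ≤ (lam ^ (-p)) ^ (1 - 1 / p) :=
        rpow_le_rpow_of_nonpos (by positivity) (Nat.le_ceil _)
          (by rw [sub_nonpos, le_div_iff₀ hp]; linarith)
    _ = lam ^ (1 - p) := by rw [← rpow_mul hlam.le]; congr 1; field_simp; ring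

/-- Effective-dimension bound: for eigenvalues `μ i = i^{-1/p}` with `p ∈ (0,1)`,
the series `∑ μ i / (μ i + λ)` converges and is bounded by `C * λ^{-p}` for all
`λ ∈ (0,1]`, with `C` depending only on `p`. -/
theorem effective_dimension_bound (p : ℝ) (hp : 0 < p) (hp1 : p < 1)
    (μ : ℕ → ℝ) (hμ : ∀ i : ℕ, 1 ≤ i → μ i = (i : ℝ) ^ (-(1 / p))) :
    ∃ C : ℝ, 0 < C ∧ ∀ lam : ℝ, 0 < lam → lam ≤ 1 →
      Summable (fun i : ℕ => μ (i + 1) / (μ (i + 1) + lam)) ∧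
      (∑' i : ℕ, μ (i + 1) / (μ (i + 1) + lam)) ≤ C * lam ^ (-p) := by
  have h1p : 0 < 1 - p := by linarith
  refine ⟨2 + p / (1 - p), by positivity, fun lam hlam hlam1 => ?_⟩
  have hs : 1 < 1 / p := by rw [lt_div_iff₀ hp]; linarith
  have hμ' : ∀ i : ℕ, μ (i + 1) = ((i + 1 : ℕ) : ℝ) ^ (-(1 / p)) := fun i => hμ _ i.succ_pos
  have hL : 1 ≤ lam ^ (-p) := one_le_rpow_of_pos_of_le_one_of_nonpos hlam hlam1 (by linarith)
  obtain ⟨hsum, hle⟩ := summable_and_tsum_div_add_le hs (μ := fun i => μ (i + 1))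
    (fun i => by rw [hμ']; positivity) (fun i => (hμ' i).le) hlam
    (N := ⌈lam ^ (-p)⌉₊) (Nat.ceil_pos.mpr (by linarith))
  refine ⟨hsum, hle.trans ?_⟩
  calc (⌈lam ^ (-p)⌉₊ : ℝ) + (⌈lam ^ (-p)⌉₊ : ℝ) ^ (1 - 1 / p) / ((1 / p - 1) * lam)
      ≤ 2 * lam ^ (-p) + lam ^ (1 - p) / ((1 / p - 1) * lam) := by
        gcongr
        · exact Nat.ceil_le_two_mul (by linarith)
        · exact natCeil_rpow_neg_rpow_le hp hp1.le hlam
    _ = (2 + p / (1 - p)) * lam ^ (-p) := by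
        have hpow : lam ^ (1 - p) = lam * lam ^ (-p) := by
          rw [sub_eq_add_neg, rpow_add hlam, rpow_one]
        rw [hpow, show 1 / p - 1 = (1 - p) / p by field_simp]
        field_simp
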